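/- arXiv:2004.00391 — 2 statements merged into one kernel-verified Lean document; each statement's English description precedes it below -/
import Mathlib

section
/- Let φ ∈ C_c^∞(ℝ³) be a nonnegative, even mollification kernel with ∫φ = 1, and write φ_ℓ(x) = ℓ^{-3}φ(x/ℓ). Then for f, g ∈ C¹(𝕋³) and 0 ≤ r ≤ 2, ‖(fg)*φ_ℓ - (f*φ_ℓ)(g*φ_ℓ)‖_{C^r} ≤ C ℓ^{2-r} ‖f‖_{C¹} ‖g‖_{C¹}, with C depending only on r and φ. -/
open MeasureTheory

/-- Mollification of `f` at scale `ℓ` with kernel `φ`: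
`(f * φ_ℓ)(x) = ∫ φ_ℓ(x - y) f(y) dy` where `φ_ℓ(z) = ℓ⁻³ φ(z/ℓ)`. -/
noncomputable def mollify (φ : (Fin 3 → ℝ) → ℝ) (ℓ : ℝ)
    (f : (Fin 3 → ℝ) → ℝ) (x : Fin 3 → ℝ) : ℝ :=
  ∫ y, (ℓ ^ 3)⁻¹ * φ (ℓ⁻¹ • (x - y)) * f y

/-- Mollification written as `∫ ψ(w) f(x - w) dw`. -/
noncomputable def smol (ψ u : (Fin 3 → ℝ) → ℝ) (x : Fin 3 → ℝ) : ℝ :=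
  ∫ w, ψ w * u (x - w)

lemma wbound {ψ u : (Fin 3 → ℝ) → ℝ} (hψc : Continuous ψ) (hψs : HasCompactSupport ψ)
    (hψ0 : ∀ w, 0 ≤ ψ w) (hψ1 : (∫ w, ψ w) = 1) (hu : Continuous u) {B : ℝ}
    (hB : ∀ w, ψ w ≠ 0 → |u w| ≤ B) : |∫ w, ψ w * u w| ≤ B := by
  have hψi : Integrable ψ := hψc.integrable_of_hasCompactSupport hψs
  have hi : Integrable (fun w => ψ w * u w) :=
    (hψc.mul hu).integrable_of_hasCompactSupport hψs.mul_right
  calc |∫ w, ψ w * u w| ≤ ∫ w, |ψ w * u w| := by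
        simpa only [Real.norm_eq_abs] using
          norm_integral_le_integral_norm (μ := volume) (fun w => ψ w * u w)
    _ ≤ ∫ w, ψ w * B := by
        refine integral_mono hi.abs (hψi.mul_const B) fun w => ?_
        by_cases h : ψ w = 0
        · simp [h]
        · rw [abs_mul, abs_of_nonneg (hψ0 w)]
          exact mul_le_mul_of_nonneg_left (hB w h) (hψ0 w)
    _ = B := by rw [integral_mul_const, hψ1, one_mul]

lemma aux {ψ f g : (Fin 3 → ℝ) → ℝ} {Mf Mg ρ : ℝ}
    (hψc : Continuous ψ) (hψs : HasCompactSupport ψ) (hψ0 : ∀ w, 0 ≤ ψ w)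
    (hψ1 : (∫ w, ψ w) = 1) (hρ : 0 ≤ ρ) (hψR : ∀ w, ψ w ≠ 0 → ‖w‖ ≤ ρ)
    (hfc : Continuous f) (hgc : Continuous g)
    (hMf : 0 ≤ Mf) (hMg : 0 ≤ Mg)
    (hfl : ∀ a b, |f a - f b| ≤ Mf * ‖a - b‖) (hgl : ∀ a b, |g a - g b| ≤ Mg * ‖a - b‖)
    (x y : Fin 3 → ℝ) :
    |smol ψ (fun z => f z * g z) x - smol ψ f x * smol ψ g x| ≤ 2 * (Mf * ρ) * (Mg * ρ) ∧
    |(smol ψ (fun z => f z * g z) x - smol ψ f x * smol ψ g x) -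
      (smol ψ (fun z => f z * g z) y - smol ψ f y * smol ψ g y)| ≤
      8 * Mf * Mg * ρ * dist x y := by
  have hψi : Integrable ψ := hψc.integrable_of_hasCompactSupport hψs
  have hInt : ∀ u : (Fin 3 → ℝ) → ℝ, Continuous u → Integrable (fun w => ψ w * u w) :=
    fun u hu => (hψc.mul hu).integrable_of_hasCompactSupport hψs.mul_right
  have hfc' : ∀ z : Fin 3 → ℝ, Continuous (fun w => f (z - w)) :=
    fun z => hfc.comp (continuous_const.sub continuous_id)
  have hgc' : ∀ z : Fin 3 → ℝ, Continuous (fun w => g (z - w)) :=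
    fun z => hgc.comp (continuous_const.sub continuous_id)
  -- key identity
  have hkey : ∀ z, smol ψ (fun t => f t * g t) z - smol ψ f z * smol ψ g z =
      (∫ w, ψ w * ((f (z - w) - f z) * (g (z - w) - g z))) -
      (∫ w, ψ w * (f (z - w) - f z)) * (∫ w, ψ w * (g (z - w) - g z)) := by
    intro z
    have e1 : (∫ w, ψ w * (f (z - w) - f z)) = (∫ w, ψ w * f (z - w)) - f z := by
      have : (fun w => ψ w * (f (z - w) - f z))
          = fun w => ψ w * f (z - w) - ψ w * f z := funext fun w => by ring
      rw [this, integral_sub (hInt _ (hfc' z)) (hψi.mul_const (f z)), integral_mul_const,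
        hψ1, one_mul]
    have e2 : (∫ w, ψ w * (g (z - w) - g z)) = (∫ w, ψ w * g (z - w)) - g z := by
      have : (fun w => ψ w * (g (z - w) - g z))
          = fun w => ψ w * g (z - w) - ψ w * g z := funext fun w => by ring
      rw [this, integral_sub (hInt _ (hgc' z)) (hψi.mul_const (g z)), integral_mul_const,
        hψ1, one_mul]
    have e3 : (∫ w, ψ w * ((f (z - w) - f z) * (g (z - w) - g z)))
        = (∫ w, ψ w * (f (z - w) * g (z - w))) - g z * (∫ w, ψ w * f (z - w))
          - f z * (∫ w, ψ w * g (z - w)) + f z * g z := by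
      have : (fun w => ψ w * ((f (z - w) - f z) * (g (z - w) - g z)))
          = fun w => (ψ w * (f (z - w) * g (z - w)) - g z * (ψ w * f (z - w))
              - f z * (ψ w * g (z - w))) + (f z * g z) * ψ w := funext fun w => by ring
      have iA : Integrable (fun w => ψ w * (f (z - w) * g (z - w)) -
          g z * (ψ w * f (z - w))) volume :=
        (hInt _ ((hfc' z).mul (hgc' z))).sub ((hInt _ (hfc' z)).const_mul (g z))
      have iB : Integrable (fun w => ψ w * (f (z - w) * g (z - w)) -
          g z * (ψ w * f (z - w)) - f z * (ψ w * g (z - w))) volume :=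
        iA.sub ((hInt _ (hgc' z)).const_mul (f z))
      rw [this, integral_add iB (hψi.const_mul (f z * g z)),
        integral_sub iA ((hInt _ (hgc' z)).const_mul (f z)),
        integral_sub (hInt (fun w => f (z - w) * g (z - w)) ((hfc' z).mul (hgc' z))) ((hInt _ (hfc' z)).const_mul (g z)),
        integral_const_mul, integral_const_mul, integral_const_mul, hψ1, mul_one]
    rw [e1, e2, e3]
    show (∫ w, ψ w * (f (z - w) * g (z - w))) - smol ψ f z * smol ψ g z = _
    unfold smol
    ring
  -- bounds on the building blocks
  have hFb : ∀ z w, ψ w ≠ 0 → |f (z - w) - f z| ≤ Mf * ρ := by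
    intro z w hw
    calc |f (z - w) - f z| ≤ Mf * ‖z - w - z‖ := hfl _ _
      _ = Mf * ‖w‖ := by rw [sub_sub_cancel_left, norm_neg]
      _ ≤ Mf * ρ := mul_le_mul_of_nonneg_left (hψR w hw) hMf
  have hGb : ∀ z w, ψ w ≠ 0 → |g (z - w) - g z| ≤ Mg * ρ := by
    intro z w hw
    calc |g (z - w) - g z| ≤ Mg * ‖z - w - z‖ := hgl _ _
      _ = Mg * ‖w‖ := by rw [sub_sub_cancel_left, norm_neg]
      _ ≤ Mg * ρ := mul_le_mul_of_nonneg_left (hψR w hw) hMg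
  have hFd : ∀ w, |(f (x - w) - f x) - (f (y - w) - f y)| ≤ 2 * Mf * dist x y := by
    intro w
    have h1 : |f (x - w) - f (y - w)| ≤ Mf * ‖x - y‖ := by
      simpa [sub_sub_sub_cancel_right] using hfl (x - w) (y - w)
    have h2 : |f x - f y| ≤ Mf * ‖x - y‖ := hfl x y
    have e : (f (x - w) - f x) - (f (y - w) - f y)
        = (f (x - w) - f (y - w)) - (f x - f y) := by ring
    rw [e, dist_eq_norm]
    calc |(f (x - w) - f (y - w)) - (f x - f y)|
        ≤ |f (x - w) - f (y - w)| + |f x - f y| := abs_sub _ _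
      _ ≤ Mf * ‖x - y‖ + Mf * ‖x - y‖ := add_le_add h1 h2
      _ = 2 * Mf * ‖x - y‖ := by ring
  have hGd : ∀ w, |(g (x - w) - g x) - (g (y - w) - g y)| ≤ 2 * Mg * dist x y := by
    intro w
    have h1 : |g (x - w) - g (y - w)| ≤ Mg * ‖x - y‖ := by
      simpa [sub_sub_sub_cancel_right] using hgl (x - w) (y - w)
    have h2 : |g x - g y| ≤ Mg * ‖x - y‖ := hgl x y
    have e : (g (x - w) - g x) - (g (y - w) - g y)
        = (g (x - w) - g (y - w)) - (g x - g y) := by ring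
    rw [e, dist_eq_norm]
    calc |(g (x - w) - g (y - w)) - (g x - g y)|
        ≤ |g (x - w) - g (y - w)| + |g x - g y| := abs_sub _ _
      _ ≤ Mg * ‖x - y‖ + Mg * ‖x - y‖ := add_le_add h1 h2
      _ = 2 * Mg * ‖x - y‖ := by ring
  have hFcz : ∀ z, Continuous (fun w => f (z - w) - f z) :=
    fun z => (hfc' z).sub continuous_const
  have hGcz : ∀ z, Continuous (fun w => g (z - w) - g z) :=
    fun z => (hgc' z).sub continuous_const
  -- the integral bounds
  have b1 : ∀ z, |∫ w, ψ w * ((f (z - w) - f z) * (g (z - w) - g z))| ≤ (Mf * ρ) * (Mg * ρ) := by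
    intro z
    refine wbound (u := fun w => (f (z - w) - f z) * (g (z - w) - g z)) hψc hψs hψ0 hψ1 ((hFcz z).mul (hGcz z)) fun w hw => ?_
    rw [abs_mul]
    exact mul_le_mul (hFb z w hw) (hGb z w hw) (abs_nonneg _) (mul_nonneg hMf hρ)
  have b2 : ∀ z, |∫ w, ψ w * (f (z - w) - f z)| ≤ Mf * ρ :=
    fun z => wbound hψc hψs hψ0 hψ1 (hFcz z) fun w hw => hFb z w hw
  have b3 : ∀ z, |∫ w, ψ w * (g (z - w) - g z)| ≤ Mg * ρ :=
    fun z => wbound hψc hψs hψ0 hψ1 (hGcz z) fun w hw => hGb z w hw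
  have hMfρ : 0 ≤ Mf * ρ := mul_nonneg hMf hρ
  have hMgρ : 0 ≤ Mg * ρ := mul_nonneg hMg hρ
  constructor
  · -- pointwise bound
    rw [hkey x]
    calc |(∫ w, ψ w * ((f (x - w) - f x) * (g (x - w) - g x))) -
          (∫ w, ψ w * (f (x - w) - f x)) * (∫ w, ψ w * (g (x - w) - g x))|
        ≤ |∫ w, ψ w * ((f (x - w) - f x) * (g (x - w) - g x))| +
          |(∫ w, ψ w * (f (x - w) - f x)) * (∫ w, ψ w * (g (x - w) - g x))| := abs_sub _ _
      _ ≤ (Mf * ρ) * (Mg * ρ) + (Mf * ρ) * (Mg * ρ) := by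
          refine add_le_add (b1 x) ?_
          rw [abs_mul]
          exact mul_le_mul (b2 x) (b3 x) (abs_nonneg _) hMfρ
      _ = 2 * (Mf * ρ) * (Mg * ρ) := by ring
  · -- Lipschitz-in-x bound
    rw [hkey x, hkey y]
    have hd0 : 0 ≤ dist x y := dist_nonneg
    -- difference of the first integrals
    have c1 : |(∫ w, ψ w * ((f (x - w) - f x) * (g (x - w) - g x))) -
        (∫ w, ψ w * ((f (y - w) - f y) * (g (y - w) - g y)))| ≤
        4 * Mf * Mg * ρ * dist x y := by
      have e : (∫ w, ψ w * ((f (x - w) - f x) * (g (x - w) - g x))) -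
          (∫ w, ψ w * ((f (y - w) - f y) * (g (y - w) - g y)))
          = ∫ w, ψ w * ((f (x - w) - f x) * (g (x - w) - g x) -
              (f (y - w) - f y) * (g (y - w) - g y)) := by
        rw [← integral_sub (hInt (fun w => (f (x - w) - f x) * (g (x - w) - g x)) ((hFcz x).mul (hGcz x))) (hInt (fun w => (f (y - w) - f y) * (g (y - w) - g y)) ((hFcz y).mul (hGcz y)))]
        congr 1; funext w; ring
      rw [e]
      have hb : ∀ w, ψ w ≠ 0 → |(f (x - w) - f x) * (g (x - w) - g x) -
          (f (y - w) - f y) * (g (y - w) - g y)| ≤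
          2 * Mf * dist x y * (Mg * ρ) + Mf * ρ * (2 * Mg * dist x y) := by
        intro w hw
        have e2 : (f (x - w) - f x) * (g (x - w) - g x) -
            (f (y - w) - f y) * (g (y - w) - g y)
            = ((f (x - w) - f x) - (f (y - w) - f y)) * (g (x - w) - g x) +
              (f (y - w) - f y) * ((g (x - w) - g x) - (g (y - w) - g y)) := by ring
        rw [e2]
        calc _ ≤ |((f (x - w) - f x) - (f (y - w) - f y)) * (g (x - w) - g x)| +
              |(f (y - w) - f y) * ((g (x - w) - g x) - (g (y - w) - g y))| := abs_add_le _ _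
          _ = |(f (x - w) - f x) - (f (y - w) - f y)| * |g (x - w) - g x| +
              |f (y - w) - f y| * |(g (x - w) - g x) - (g (y - w) - g y)| := by
              rw [abs_mul, abs_mul]
          _ ≤ 2 * Mf * dist x y * (Mg * ρ) + Mf * ρ * (2 * Mg * dist x y) := by
              refine add_le_add (mul_le_mul (hFd w) (hGb x w hw) (abs_nonneg _)
                (by positivity)) (mul_le_mul (hFb y w hw) (hGd w) (abs_nonneg _) hMfρ)
      have := wbound hψc hψs hψ0 hψ1
        (((hFcz x).mul (hGcz x)).sub ((hFcz y).mul (hGcz y))) hb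
      calc _ ≤ 2 * Mf * dist x y * (Mg * ρ) + Mf * ρ * (2 * Mg * dist x y) := this
        _ = 4 * Mf * Mg * ρ * dist x y := by ring
    -- difference of the products
    have c2x : |(∫ w, ψ w * (f (x - w) - f x)) - (∫ w, ψ w * (f (y - w) - f y))| ≤
        2 * Mf * dist x y := by
      have e : (∫ w, ψ w * (f (x - w) - f x)) - (∫ w, ψ w * (f (y - w) - f y))
          = ∫ w, ψ w * ((f (x - w) - f x) - (f (y - w) - f y)) := by
        rw [← integral_sub (hInt _ (hFcz x)) (hInt _ (hFcz y))]
        congr 1; funext w; ring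
      rw [e]
      exact wbound hψc hψs hψ0 hψ1 ((hFcz x).sub (hFcz y)) fun w _ => hFd w
    have c2y : |(∫ w, ψ w * (g (x - w) - g x)) - (∫ w, ψ w * (g (y - w) - g y))| ≤
        2 * Mg * dist x y := by
      have e : (∫ w, ψ w * (g (x - w) - g x)) - (∫ w, ψ w * (g (y - w) - g y))
          = ∫ w, ψ w * ((g (x - w) - g x) - (g (y - w) - g y)) := by
        rw [← integral_sub (hInt _ (hGcz x)) (hInt _ (hGcz y))]
        congr 1; funext w; ring
      rw [e]
      exact wbound hψc hψs hψ0 hψ1 ((hGcz x).sub (hGcz y)) fun w _ => hGd w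
    have c2 : |(∫ w, ψ w * (f (x - w) - f x)) * (∫ w, ψ w * (g (x - w) - g x)) -
        (∫ w, ψ w * (f (y - w) - f y)) * (∫ w, ψ w * (g (y - w) - g y))| ≤
        4 * Mf * Mg * ρ * dist x y := by
      set a := ∫ w, ψ w * (f (x - w) - f x)
      set b := ∫ w, ψ w * (g (x - w) - g x)
      set a' := ∫ w, ψ w * (f (y - w) - f y)
      set b' := ∫ w, ψ w * (g (y - w) - g y)
      have e2 : a * b - a' * b' = (a - a') * b + a' * (b - b') := by ring
      rw [e2]
      calc _ ≤ |(a - a') * b| + |a' * (b - b')| := abs_add_le _ _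
        _ = |a - a'| * |b| + |a'| * |b - b'| := by rw [abs_mul, abs_mul]
        _ ≤ 2 * Mf * dist x y * (Mg * ρ) + Mf * ρ * (2 * Mg * dist x y) := by
            exact add_le_add (mul_le_mul c2x (b3 x) (abs_nonneg _) (by positivity))
              (mul_le_mul (b2 y) c2y (abs_nonneg _) hMfρ)
        _ = 4 * Mf * Mg * ρ * dist x y := by ring
    calc _ ≤ |(∫ w, ψ w * ((f (x - w) - f x) * (g (x - w) - g x))) -
            (∫ w, ψ w * ((f (y - w) - f y) * (g (y - w) - g y)))| +
          |(∫ w, ψ w * (f (x - w) - f x)) * (∫ w, ψ w * (g (x - w) - g x)) -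
            (∫ w, ψ w * (f (y - w) - f y)) * (∫ w, ψ w * (g (y - w) - g y))| := by
          have e : ((∫ w, ψ w * ((f (x - w) - f x) * (g (x - w) - g x))) -
              (∫ w, ψ w * (f (x - w) - f x)) * (∫ w, ψ w * (g (x - w) - g x))) -
              ((∫ w, ψ w * ((f (y - w) - f y) * (g (y - w) - g y))) -
              (∫ w, ψ w * (f (y - w) - f y)) * (∫ w, ψ w * (g (y - w) - g y)))
              = ((∫ w, ψ w * ((f (x - w) - f x) * (g (x - w) - g x))) -
              (∫ w, ψ w * ((f (y - w) - f y) * (g (y - w) - g y)))) -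
              ((∫ w, ψ w * (f (x - w) - f x)) * (∫ w, ψ w * (g (x - w) - g x)) -
              (∫ w, ψ w * (f (y - w) - f y)) * (∫ w, ψ w * (g (y - w) - g y))) := by ring
          rw [e]
          exact abs_sub _ _
      _ ≤ 4 * Mf * Mg * ρ * dist x y + 4 * Mf * Mg * ρ * dist x y := add_le_add c1 c2
      _ = 8 * Mf * Mg * ρ * dist x y := by ring

theorem stmt12 (r : ℝ) (hr0 : 0 ≤ r) (hr1 : r ≤ 1)
    (φ : (Fin 3 → ℝ) → ℝ) (hφsmooth : ContDiff ℝ (⊤ : ℕ∞) φ)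
    (hφsupp : HasCompactSupport φ) (hφpos : ∀ x, 0 ≤ φ x)
    (hφeven : ∀ x, φ (-x) = φ x) (hφint : (∫ x, φ x) = 1) :
    ∃ C : ℝ, 0 < C ∧
      ∀ (ℓ : ℝ), 0 < ℓ → ∀ (f g : (Fin 3 → ℝ) → ℝ) (Mf Mg : ℝ),
        ContDiff ℝ 1 f → ContDiff ℝ 1 g →
        (∀ x, |f x| ≤ Mf ∧ ‖fderiv ℝ f x‖ ≤ Mf) →
        (∀ x, |g x| ≤ Mg ∧ ‖fderiv ℝ g x‖ ≤ Mg) →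
        ∀ x y,
          |(mollify φ ℓ (fun z => f z * g z) x - mollify φ ℓ f x * mollify φ ℓ g x)| ≤
            C * ℓ ^ 2 * Mf * Mg ∧
          |(mollify φ ℓ (fun z => f z * g z) x - mollify φ ℓ f x * mollify φ ℓ g x) -
            (mollify φ ℓ (fun z => f z * g z) y - mollify φ ℓ f y * mollify φ ℓ g y)| ≤
            C * ℓ ^ (2 - r) * Mf * Mg * dist x y ^ r := by
  obtain ⟨R, hR, hRs⟩ := hφsupp.isBounded.subset_closedBall_lt 0 0
  refine ⟨8 * R ^ 2 + 8 * R + 1, by nlinarith, ?_⟩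
  set C := 8 * R ^ 2 + 8 * R + 1 with hC
  have hCpos : 0 < C := by rw [hC]; nlinarith
  have h8R : 8 * R ≤ C := by rw [hC]; nlinarith
  have h4R : 4 * R ^ 2 ≤ C := by rw [hC]; nlinarith
  intro ℓ hℓ f g Mf Mg hf hg hfb hgb x y
  set ψ : (Fin 3 → ℝ) → ℝ := fun w => (ℓ ^ 3)⁻¹ * φ (ℓ⁻¹ • w) with hψdef
  have hℓ3 : (0:ℝ) < ℓ ^ 3 := by positivity
  have hψc : Continuous ψ :=
    continuous_const.mul (hφsmooth.continuous.comp (continuous_const_smul _))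
  have hψs : HasCompactSupport ψ :=
    HasCompactSupport.mul_left (hφsupp.comp_smul (inv_ne_zero hℓ.ne'))
  have hψ0 : ∀ w, 0 ≤ ψ w := fun w => mul_nonneg (by positivity) (hφpos _)
  have hψ1 : (∫ w, ψ w) = 1 := by
    have h := Measure.integral_comp_inv_smul_of_nonneg (volume : Measure (Fin 3 → ℝ)) φ hℓ.le
    simp only [Module.finrank_fintype_fun_eq_card, Fintype.card_fin, smul_eq_mul, hφint,
      mul_one] at h
    rw [hψdef]
    simp only []
    rw [integral_const_mul, h]
    field_simp
  have hψR : ∀ w, ψ w ≠ 0 → ‖w‖ ≤ ℓ * R := by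
    intro w hw
    have h1 : φ (ℓ⁻¹ • w) ≠ 0 := by
      intro h
      exact hw (by simp [hψdef, h])
    have h2 : ℓ⁻¹ • w ∈ tsupport φ := subset_tsupport φ h1
    have h3 : ‖ℓ⁻¹ • w‖ ≤ R := by
      have := hRs h2
      simpa [Metric.mem_closedBall, dist_eq_norm] using this
    have h4 : ‖ℓ⁻¹ • w‖ = ℓ⁻¹ * ‖w‖ := by
      rw [norm_smul, Real.norm_eq_abs, abs_of_pos (inv_pos.mpr hℓ)]
    rw [h4] at h3
    have h5 : ‖w‖ = ℓ * (ℓ⁻¹ * ‖w‖) := by field_simp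
    rw [h5]
    exact mul_le_mul_of_nonneg_left h3 hℓ.le
  have hmol : ∀ (u : (Fin 3 → ℝ) → ℝ) (z : Fin 3 → ℝ), mollify φ ℓ u z = smol ψ u z := by
    intro u z
    unfold mollify smol
    rw [← integral_sub_left_eq_self (fun w => ψ w * u (z - w)) volume z]
    congr 1
    funext w
    simp [hψdef, sub_sub_cancel]
  have hMf0 : 0 ≤ Mf := le_trans (abs_nonneg _) (hfb x).1
  have hMg0 : 0 ≤ Mg := le_trans (abs_nonneg _) (hgb x).1
  have hfl : ∀ a b : Fin 3 → ℝ, |f a - f b| ≤ Mf * ‖a - b‖ := by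
    intro a b
    have := Convex.norm_image_sub_le_of_norm_fderiv_le (f := f)
      (fun z _ => (hf.differentiable one_ne_zero) z) (fun z _ => (hfb z).2) convex_univ
      (Set.mem_univ b) (Set.mem_univ a)
    simpa [Real.norm_eq_abs] using this
  have hgl : ∀ a b : Fin 3 → ℝ, |g a - g b| ≤ Mg * ‖a - b‖ := by
    intro a b
    have := Convex.norm_image_sub_le_of_norm_fderiv_le (f := g)
      (fun z _ => (hg.differentiable one_ne_zero) z) (fun z _ => (hgb z).2) convex_univ
      (Set.mem_univ b) (Set.mem_univ a)
    simpa [Real.norm_eq_abs] using this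
  have hρ : (0:ℝ) ≤ ℓ * R := by positivity
  have hax := aux hψc hψs hψ0 hψ1 hρ hψR (hf.continuous) (hg.continuous) hMf0 hMg0 hfl hgl x y
  have haxy := aux hψc hψs hψ0 hψ1 hρ hψR (hf.continuous) (hg.continuous) hMf0 hMg0 hfl hgl y x
  rw [hmol, hmol, hmol, hmol, hmol, hmol]
  have hptx := hax.1
  have hpty := haxy.1
  have hdiff := hax.2
  constructor
  · calc |smol ψ (fun z => f z * g z) x - smol ψ f x * smol ψ g x|
        ≤ 2 * (Mf * (ℓ * R)) * (Mg * (ℓ * R)) := hptx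
      _ ≤ C * ℓ ^ 2 * Mf * Mg := by
          rw [hC]
          nlinarith [mul_nonneg (mul_nonneg hR.le hR.le)
              (mul_nonneg (mul_nonneg (sq_nonneg ℓ) hMf0) hMg0),
            mul_nonneg hR.le (mul_nonneg (mul_nonneg (sq_nonneg ℓ) hMf0) hMg0),
            mul_nonneg (mul_nonneg (sq_nonneg ℓ) hMf0) hMg0]
  · set Δ := (smol ψ (fun z => f z * g z) x - smol ψ f x * smol ψ g x) -
      (smol ψ (fun z => f z * g z) y - smol ψ f y * smol ψ g y) with hΔ
    have hd0 : 0 ≤ dist x y := dist_nonneg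
    have hdr0 : 0 ≤ dist x y ^ r := Real.rpow_nonneg hd0 _
    have hlr0 : 0 ≤ ℓ ^ (2 - r) := Real.rpow_nonneg hℓ.le _
    have hb1 : |Δ| ≤ 8 * Mf * Mg * (ℓ * R) * dist x y := hdiff
    have hb2 : |Δ| ≤ 4 * (Mf * (ℓ * R)) * (Mg * (ℓ * R)) := by
      calc |Δ| ≤ |smol ψ (fun z => f z * g z) x - smol ψ f x * smol ψ g x| +
            |smol ψ (fun z => f z * g z) y - smol ψ f y * smol ψ g y| := abs_sub _ _
        _ ≤ 2 * (Mf * (ℓ * R)) * (Mg * (ℓ * R)) + 2 * (Mf * (ℓ * R)) * (Mg * (ℓ * R)) :=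
            add_le_add hptx hpty
        _ = 4 * (Mf * (ℓ * R)) * (Mg * (ℓ * R)) := by ring
    rcases eq_or_lt_of_le hd0 with hd | hd
    · have h0 : |Δ| ≤ 0 := by
        rw [← hd] at hb1
        simpa using hb1
      have hRHS : 0 ≤ C * ℓ ^ (2 - r) * Mf * Mg * dist x y ^ r :=
        mul_nonneg (mul_nonneg (mul_nonneg (mul_nonneg hCpos.le hlr0) hMf0) hMg0) hdr0
      linarith
    · rcases le_or_gt (dist x y) ℓ with hcase | hcase
      · -- d ≤ ℓ : use the Lipschitz bound
        have e1 : dist x y ^ r * dist x y ^ (1 - r) = dist x y := by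
          rw [← Real.rpow_add hd]; norm_num
        have e2 : ℓ ^ (1:ℝ) * ℓ ^ (1 - r) = ℓ ^ (2 - r) := by
          rw [← Real.rpow_add hℓ]; congr 1; ring
        have e3 : dist x y ^ (1 - r) ≤ ℓ ^ (1 - r) :=
          Real.rpow_le_rpow hd0 hcase (by linarith)
        have hc : (0:ℝ) ≤ 8 * R * Mf * Mg :=
          mul_nonneg (mul_nonneg (by positivity) hMf0) hMg0
        calc |Δ| ≤ 8 * Mf * Mg * (ℓ * R) * dist x y := hb1
          _ = 8 * R * Mf * Mg * (ℓ ^ (1:ℝ) * (dist x y ^ r * dist x y ^ (1 - r))) := by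
              rw [e1, Real.rpow_one]; ring
          _ ≤ 8 * R * Mf * Mg * (ℓ ^ (1:ℝ) * (dist x y ^ r * ℓ ^ (1 - r))) := by
              refine mul_le_mul_of_nonneg_left (mul_le_mul_of_nonneg_left
                (mul_le_mul_of_nonneg_left e3 hdr0) ?_) hc
              rw [Real.rpow_one]; exact hℓ.le
          _ = 8 * R * (ℓ ^ (1:ℝ) * ℓ ^ (1 - r)) * Mf * Mg * dist x y ^ r := by ring
          _ = 8 * R * ℓ ^ (2 - r) * Mf * Mg * dist x y ^ r := by rw [e2]
          _ ≤ C * ℓ ^ (2 - r) * Mf * Mg * dist x y ^ r := by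
              exact mul_le_mul_of_nonneg_right (mul_le_mul_of_nonneg_right
                (mul_le_mul_of_nonneg_right (mul_le_mul_of_nonneg_right h8R hlr0) hMf0) hMg0) hdr0
      · -- ℓ < d : use the pointwise bound
        have e2' : (ℓ:ℝ) ^ (2:ℕ) = ℓ ^ (2 - r) * ℓ ^ r := by
          rw [← Real.rpow_natCast ℓ 2, ← Real.rpow_add hℓ]; congr 1; push_cast; ring
        have e3' : ℓ ^ r ≤ dist x y ^ r := Real.rpow_le_rpow hℓ.le hcase.le hr0
        have hc : (0:ℝ) ≤ 4 * R ^ 2 * Mf * Mg :=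
          mul_nonneg (mul_nonneg (by positivity) hMf0) hMg0
        calc |Δ| ≤ 4 * (Mf * (ℓ * R)) * (Mg * (ℓ * R)) := hb2
          _ = 4 * R ^ 2 * Mf * Mg * (ℓ ^ (2:ℕ)) := by ring
          _ = 4 * R ^ 2 * Mf * Mg * (ℓ ^ (2 - r) * ℓ ^ r) := by rw [e2']
          _ ≤ 4 * R ^ 2 * Mf * Mg * (ℓ ^ (2 - r) * dist x y ^ r) :=
              mul_le_mul_of_nonneg_left (mul_le_mul_of_nonneg_left e3' hlr0) hc
          _ = 4 * R ^ 2 * ℓ ^ (2 - r) * Mf * Mg * dist x y ^ r := by ring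
          _ ≤ C * ℓ ^ (2 - r) * Mf * Mg * dist x y ^ r := by
              exact mul_le_mul_of_nonneg_right (mul_le_mul_of_nonneg_right
                (mul_le_mul_of_nonneg_right (mul_le_mul_of_nonneg_right h4R hlr0) hMf0) hMg0) hdr0
end

section
/- For a smooth vector field v : 𝕋³ → ℝ³, define u as the zero-mean solution of Δu = v - ⨏v on 𝕋³ and let 𝓟 denote the Leray projection onto divergence-free zero-mean fields. Then the matrix field 𝓡v := (1/4)(∇𝓟u + (∇𝓟u)ᵀ) + (3/4)(∇u + (∇u)ᵀ) - (1/2)(div u) Id is symmetric, traceless, and satisfies div(𝓡v) = v - ⨏_{𝕋³} v. -/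
open MeasureTheory Real

/-- Partial derivative `∂ᵢ f` of a scalar function on `ℝ³`. -/
noncomputable def pd (f : (Fin 3 → ℝ) → ℝ) (i : Fin 3) (x : Fin 3 → ℝ) : ℝ :=
  fderiv ℝ f x (Pi.single i 1)

/-- The matrix field `𝓡v = (1/4)(∇𝓟u + (∇𝓟u)ᵀ) + (3/4)(∇u + (∇u)ᵀ) - (1/2)(div u)Id`,
where `w = 𝓟u` is the Leray projection of `u`. -/
noncomputable def Rop (u w : (Fin 3 → ℝ) → (Fin 3 → ℝ)) (x : Fin 3 → ℝ) :
    Matrix (Fin 3) (Fin 3) ℝ :=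
  Matrix.of fun i j =>
    (1/4) * (pd (fun y => w y j) i x + pd (fun y => w y i) j x) +
    (3/4) * (pd (fun y => u y j) i x + pd (fun y => u y i) j x) -
    (1/2) * (∑ m, pd (fun y => u y m) m x) * (if i = j then 1 else 0)

lemma contDiff_pd {f : (Fin 3 → ℝ) → ℝ} (hf : ContDiff ℝ (⊤ : ℕ∞) f) (i : Fin 3) :
    ContDiff ℝ (⊤ : ℕ∞) (pd f i) :=
  (hf.fderiv_right (m := (⊤ : ℕ∞)) (by simp)).clm_apply contDiff_const

lemma pd_comm {f : (Fin 3 → ℝ) → ℝ} (hf : ContDiff ℝ (⊤ : ℕ∞) f) (i j : Fin 3) (x : Fin 3 → ℝ) :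
    pd (fun y => pd f j y) i x = pd (fun y => pd f i y) j x := by
  have hd : Differentiable ℝ f := hf.differentiable (by simp)
  have hd2 : Differentiable ℝ (fderiv ℝ f) :=
    (hf.fderiv_right (m := (⊤ : ℕ∞)) (by simp)).differentiable (by simp)
  have key : ∀ a b : Fin 3 → ℝ,
      fderiv ℝ (fderiv ℝ f) x a b = fderiv ℝ (fderiv ℝ f) x b a :=
    second_derivative_symmetric (fun y => (hd y).hasFDerivAt) (hd2 x).hasFDerivAt
  have h1 : ∀ (k l : Fin 3), pd (fun y => pd f l y) k x
      = fderiv ℝ (fderiv ℝ f) x (Pi.single k 1) (Pi.single l 1) := by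
    intro k l
    simp only [pd]
    rw [fderiv_clm_apply (hd2 x) (differentiableAt_const _)]
    simp
  rw [h1, h1, key]

lemma pd_add {f g : (Fin 3 → ℝ) → ℝ} (hf : Differentiable ℝ f) (hg : Differentiable ℝ g)
    (i : Fin 3) (x : Fin 3 → ℝ) :
    pd (fun y => f y + g y) i x = pd f i x + pd g i x := by
  simp [pd, fderiv_fun_add (hf x) (hg x)]

lemma pd_sub {f g : (Fin 3 → ℝ) → ℝ} (hf : Differentiable ℝ f) (hg : Differentiable ℝ g)
    (i : Fin 3) (x : Fin 3 → ℝ) :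
    pd (fun y => f y - g y) i x = pd f i x - pd g i x := by
  simp [pd, fderiv_fun_sub (hf x) (hg x)]

lemma pd_const_mul {f : (Fin 3 → ℝ) → ℝ} (hf : Differentiable ℝ f) (c : ℝ)
    (i : Fin 3) (x : Fin 3 → ℝ) :
    pd (fun y => c * f y) i x = c * pd f i x := by
  simp [pd, fderiv_const_mul (hf x) c]

lemma pd_mul_const {f : (Fin 3 → ℝ) → ℝ} (hf : Differentiable ℝ f) (c : ℝ)
    (i : Fin 3) (x : Fin 3 → ℝ) :
    pd (fun y => f y * c) i x = pd f i x * c := by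
  simp [pd, fderiv_mul_const (hf x) c]
  ring

lemma pd_sum {f : Fin 3 → (Fin 3 → ℝ) → ℝ} (hf : ∀ m, Differentiable ℝ (f m))
    (i : Fin 3) (x : Fin 3 → ℝ) :
    pd (fun y => ∑ m, f m y) i x = ∑ m, pd (f m) i x := by
  simp [pd, fderiv_fun_sum (fun m _ => (hf m x))]

lemma pd_congr {f g : (Fin 3 → ℝ) → ℝ} (h : ∀ y, f y = g y) (i : Fin 3) (x : Fin 3 → ℝ) :
    pd f i x = pd g i x := by
  have : f = g := funext h
  rw [this]

lemma pd_zero (i : Fin 3) (x : Fin 3 → ℝ) : pd (fun _ => (0:ℝ)) i x = 0 := by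
  simp [pd]

lemma sum_delta (j : Fin 3) (A B C D E : Fin 3 → ℝ) :
    (∑ i, ((1/4) * (A i + B i) + (3/4) * (C i + D i) - (1/2) * E i * (if i = j then 1 else 0)))
    = (1/4) * (∑ i, A i) + (1/4) * (∑ i, B i) + (3/4) * (∑ i, C i) + (3/4) * (∑ i, D i)
      - (1/2) * E j := by
  fin_cases j <;> norm_num [Fin.sum_univ_three] <;> ring

theorem stmt15 (v u w : (Fin 3 → ℝ) → (Fin 3 → ℝ)) (χ : (Fin 3 → ℝ) → ℝ)
    (vavg : Fin 3 → ℝ)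
    (hv : ContDiff ℝ (⊤ : ℕ∞) v) (hu : ContDiff ℝ (⊤ : ℕ∞) u) (hw : ContDiff ℝ (⊤ : ℕ∞) w)
    (hχ : ContDiff ℝ (⊤ : ℕ∞) χ)
    (hvper : ∀ (x : Fin 3 → ℝ) (n : Fin 3 → ℤ), v (x + fun i => 2 * π * n i) = v x)
    (huper : ∀ (x : Fin 3 → ℝ) (n : Fin 3 → ℤ), u (x + fun i => 2 * π * n i) = u x)
    (hwper : ∀ (x : Fin 3 → ℝ) (n : Fin 3 → ℤ), w (x + fun i => 2 * π * n i) = w x)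
    (hχper : ∀ (x : Fin 3 → ℝ) (n : Fin 3 → ℤ), χ (x + fun i => 2 * π * n i) = χ x)
    -- `vavg` is the average of `v` over the torus
    (havg : ∀ j, vavg j =
      (∫ x in Set.Icc (0 : Fin 3 → ℝ) (fun _ => 2 * π), v x j) / (2 * π) ^ 3)
    -- `u` is a zero-mean solution of `Δu = v - ⨏v`
    (humean : ∀ j, (∫ x in Set.Icc (0 : Fin 3 → ℝ) (fun _ => 2 * π), u x j) = 0)
    (hlap : ∀ x j, (∑ i, pd (fun y => pd (fun z => u z j) i y) i x) = v x j - vavg j)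
    -- `w = 𝓟u`: `u = w + ∇χ` with `w` divergence-free (Helmholtz decomposition)
    (hdecomp : ∀ x i, u x i = w x i + pd χ i x)
    (hdivw : ∀ x, (∑ i, pd (fun y => w y i) i x) = 0) :
    (∀ x, (Rop u w x).IsSymm) ∧
    (∀ x, (Rop u w x).trace = 0) ∧
    (∀ x j, (∑ i, pd (fun y => Rop u w y i j) i x) = v x j - vavg j) := by
  -- component smoothness
  have huC : ∀ m, ContDiff ℝ (⊤ : ℕ∞) (fun y => u y m) := fun m => (contDiff_pi.mp hu) m
  have hwC : ∀ m, ContDiff ℝ (⊤ : ℕ∞) (fun y => w y m) := fun m => (contDiff_pi.mp hw) m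
  have huD : ∀ m, Differentiable ℝ (fun y => u y m) := fun m => (huC m).differentiable (by simp)
  have hwD : ∀ m, Differentiable ℝ (fun y => w y m) := fun m => (hwC m).differentiable (by simp)
  have hpuD : ∀ m i, Differentiable ℝ (pd (fun y => u y m) i) :=
    fun m i => (contDiff_pd (huC m) i).differentiable (by simp)
  have hpwD : ∀ m i, Differentiable ℝ (pd (fun y => w y m) i) :=
    fun m i => (contDiff_pd (hwC m) i).differentiable (by simp)
  have hpχC : ∀ i, ContDiff ℝ (⊤ : ℕ∞) (pd χ i) := fun i => contDiff_pd hχ i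
  have hpχD : ∀ i, Differentiable ℝ (pd χ i) := fun i => (hpχC i).differentiable (by simp)
  have hppχD : ∀ i j, Differentiable ℝ (pd (pd χ i) j) :=
    fun i j => (contDiff_pd (hpχC i) j).differentiable (by simp)
  refine ⟨?_, ?_, ?_⟩
  · -- symmetry
    intro x
    rw [Matrix.IsSymm]
    ext i j
    by_cases h : i = j
    · subst h; rfl
    · simp only [Matrix.transpose_apply, Rop, Matrix.of_apply]
      rw [if_neg h, if_neg (Ne.symm h)]
      ring
  · -- trace
    intro x
    have h3 : (Rop u w x).trace
        = ∑ i, ((1/4) * (pd (fun y => w y i) i x + pd (fun y => w y i) i x) +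
          (3/4) * (pd (fun y => u y i) i x + pd (fun y => u y i) i x) -
          (1/2) * (∑ m, pd (fun y => u y m) m x) * 1) := by
      simp [Matrix.trace, Matrix.diag, Rop]
    rw [h3]
    have hdw := hdivw x
    rw [Fin.sum_univ_three] at hdw ⊢
    rw [Fin.sum_univ_three]
    linarith
  · -- divergence
    intro x j
    -- w j = u j - ∂ⱼχ
    have hwj : ∀ y, w y j = u y j - pd χ j y := by
      intro y; have := hdecomp y j; linarith
    -- each term of the divergence
    have hterm : ∀ i, pd (fun y => Rop u w y i j) i x =
        (1/4) * (pd (fun y => pd (fun z => w z j) i y) i x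
               + pd (fun y => pd (fun z => w z i) j y) i x) +
        (3/4) * (pd (fun y => pd (fun z => u z j) i y) i x
               + pd (fun y => pd (fun z => u z i) j y) i x) -
        (1/2) * (pd (fun y => ∑ m, pd (fun z => u z m) m y) i x) * (if i = j then 1 else 0) := by
      intro i
      have e1 : (fun y => Rop u w y i j) = fun y =>
          ((1/4) * (pd (fun z => w z j) i y + pd (fun z => w z i) j y) +
          (3/4) * (pd (fun z => u z j) i y + pd (fun z => u z i) j y)) -
          ((1/2) * (∑ m, pd (fun z => u z m) m y)) * (if i = j then 1 else 0) := by
        funext y; simp only [Rop, Matrix.of_apply]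
      rw [e1]
      have dA : Differentiable ℝ fun y => pd (fun z => w z j) i y + pd (fun z => w z i) j y :=
        (hpwD j i).add (hpwD i j)
      have dB : Differentiable ℝ fun y => pd (fun z => u z j) i y + pd (fun z => u z i) j y :=
        (hpuD j i).add (hpuD i j)
      have dS : Differentiable ℝ fun y => ∑ m, pd (fun z => u z m) m y := by
        apply Differentiable.fun_sum; intro m _; exact hpuD m m
      rw [pd_sub (((dA.const_mul _).fun_add (dB.const_mul _))) ((dS.const_mul _).mul_const _) i x,
        pd_add (dA.const_mul _) (dB.const_mul _), pd_const_mul dA, pd_const_mul dB,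
        pd_mul_const (dS.const_mul _), pd_const_mul dS,
        pd_add (hpwD j i) (hpwD i j), pd_add (hpuD j i) (hpuD i j)]
    have step1 : (∑ i, pd (fun y => Rop u w y i j) i x)
        = (1/4) * (∑ i, pd (fun y => pd (fun z => w z j) i y) i x)
        + (1/4) * (∑ i, pd (fun y => pd (fun z => w z i) j y) i x)
        + (3/4) * (∑ i, pd (fun y => pd (fun z => u z j) i y) i x)
        + (3/4) * (∑ i, pd (fun y => pd (fun z => u z i) j y) i x)
        - (1/2) * pd (fun y => ∑ m, pd (fun z => u z m) m y) j x := by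
      rw [Finset.sum_congr rfl (fun i _ => hterm i)]
      exact sum_delta j
        (fun i => pd (fun y => pd (fun z => w z j) i y) i x)
        (fun i => pd (fun y => pd (fun z => w z i) j y) i x)
        (fun i => pd (fun y => pd (fun z => u z j) i y) i x)
        (fun i => pd (fun y => pd (fun z => u z i) j y) i x)
        (fun i => pd (fun y => ∑ m, pd (fun z => u z m) m y) i x)
    -- ∑ᵢ ∂ᵢ∂ⱼwᵢ = 0
    have hSB : (∑ i, pd (fun y => pd (fun z => w z i) j y) i x) = 0 := by
      calc (∑ i, pd (fun y => pd (fun z => w z i) j y) i x)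
          = ∑ i, pd (fun y => pd (fun z => w z i) i y) j x :=
            Finset.sum_congr rfl (fun i _ => pd_comm (hwC i) i j x)
        _ = pd (fun y => ∑ i, pd (fun z => w z i) i y) j x :=
            (pd_sum (fun m => hpwD m m) j x).symm
        _ = pd (fun _ => (0:ℝ)) j x := pd_congr hdivw j x
        _ = 0 := pd_zero j x
    -- ∑ᵢ ∂ᵢ∂ⱼuᵢ = ∂ⱼ(div u)
    have hSD : (∑ i, pd (fun y => pd (fun z => u z i) j y) i x)
        = pd (fun y => ∑ m, pd (fun z => u z m) m y) j x := by
      calc (∑ i, pd (fun y => pd (fun z => u z i) j y) i x)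
          = ∑ i, pd (fun y => pd (fun z => u z i) i y) j x :=
            Finset.sum_congr rfl (fun i _ => pd_comm (huC i) i j x)
        _ = pd (fun y => ∑ m, pd (fun z => u z m) m y) j x :=
            (pd_sum (fun m => hpuD m m) j x).symm
    -- ∑ᵢ ∂ᵢ∂ᵢwⱼ = ∑ᵢ ∂ᵢ∂ᵢuⱼ - ∑ᵢ ∂ᵢ∂ᵢ∂ⱼχ
    have hSA : (∑ i, pd (fun y => pd (fun z => w z j) i y) i x)
        = (∑ i, pd (fun y => pd (fun z => u z j) i y) i x)
        - (∑ i, pd (fun y => pd (pd χ j) i y) i x) := by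
      have e2 : (fun z => w z j) = fun z => u z j - pd χ j z := funext hwj
      have hAi : ∀ i, pd (fun y => pd (fun z => w z j) i y) i x
          = pd (fun y => pd (fun z => u z j) i y) i x - pd (fun y => pd (pd χ j) i y) i x := by
        intro i
        rw [show (fun y => pd (fun z => w z j) i y)
            = fun y => pd (fun z => u z j) i y - pd (pd χ j) i y from
          funext fun y => by rw [e2]; exact pd_sub (huD j) (hpχD j) i y]
        exact pd_sub (hpuD j i) (hppχD j i) i x
      rw [Finset.sum_congr rfl (fun i _ => hAi i), Finset.sum_sub_distrib]
    -- ∂ⱼ(div u) = Δ(∂ⱼχ)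
    have hdivu : ∀ y, (∑ m, pd (fun z => u z m) m y) = ∑ m, pd (pd χ m) m y := by
      intro y
      have hh : ∀ m, pd (fun z => u z m) m y = pd (fun z => w z m) m y + pd (pd χ m) m y := by
        intro m
        have e3 : (fun z => u z m) = fun z => w z m + pd χ m z := funext fun z => hdecomp z m
        rw [e3]; exact pd_add (hwD m) (hpχD m) m y
      simp only [hh, Finset.sum_add_distrib, hdivw y, zero_add]
    have hT : pd (fun y => ∑ m, pd (fun z => u z m) m y) j x
        = ∑ m, pd (fun y => pd (pd χ j) m y) m x := by
      rw [pd_congr hdivu j x, pd_sum (fun m => hppχD m m) j x]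
      refine Finset.sum_congr rfl (fun m _ => ?_)
      have s1 : pd (fun y => pd (pd χ m) m y) j x = pd (fun y => pd (pd χ m) j y) m x :=
        pd_comm (hpχC m) j m x
      have s2 : pd (fun y => pd (pd χ m) j y) m x = pd (fun y => pd (pd χ j) m y) m x :=
        pd_congr (fun y => pd_comm hχ j m y) m x
      exact s1.trans s2
    have hC := hlap x j
    rw [step1, hSB, hSD, hSA, hT]
    have : (∑ m, pd (fun y => pd (pd χ j) m y) m x)
        = ∑ i, pd (fun y => pd (pd χ j) i y) i x := rfl
    rw [this]
    linarith
end
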